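/- arXiv:2408.10363 — 8 statements merged into one kernel-verified Lean document; each statement's English description precedes it below -/
import Mathlib

section
/- For all real numbers α₁, α₂, α₃ ∈ [−1, 1] satisfying α₁+α₂+α₃ = 0, and all real numbers β₁, β₂, β₃ ∈ [−1, 1], one has (α₁+α₂−α₃)·β₁ + (α₁−α₂+α₃)·β₂ + (−α₁+α₂+α₃)·β₃ ≤ 4. -/
/-- The preparation-noncontextual bound of the Bell functional: if Alice's
expectation values `α₁, α₂, α₃ ∈ [−1,1]` satisfy `α₁+α₂+α₃ = 0` and Bob's
expectation values `β₁, β₂, β₃ ∈ [−1,1]`, the Bell expression is at most 4. -/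
theorem pnc_bound_four (α₁ α₂ α₃ β₁ β₂ β₃ : ℝ)
    (hα₁ : α₁ ∈ Set.Icc (-1 : ℝ) 1) (hα₂ : α₂ ∈ Set.Icc (-1 : ℝ) 1)
    (hα₃ : α₃ ∈ Set.Icc (-1 : ℝ) 1)
    (hsum : α₁ + α₂ + α₃ = 0)
    (hβ₁ : β₁ ∈ Set.Icc (-1 : ℝ) 1) (hβ₂ : β₂ ∈ Set.Icc (-1 : ℝ) 1)
    (hβ₃ : β₃ ∈ Set.Icc (-1 : ℝ) 1) :
    (α₁ + α₂ - α₃) * β₁ + (α₁ - α₂ + α₃) * β₂ + (-α₁ + α₂ + α₃) * β₃ ≤ 4 := by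
  obtain ⟨a1, a1'⟩ := hα₁
  obtain ⟨a2, a2'⟩ := hα₂
  obtain ⟨a3, a3'⟩ := hα₃
  obtain ⟨b1, b1'⟩ := hβ₁
  obtain ⟨b2, b2'⟩ := hβ₂
  obtain ⟨b3, b3'⟩ := hβ₃
  have key : |α₁| + |α₂| + |α₃| ≤ 2 := by
    rcases abs_cases α₁ with ⟨h1, _⟩ | ⟨h1, _⟩ <;>
    rcases abs_cases α₂ with ⟨h2, _⟩ | ⟨h2, _⟩ <;>
    rcases abs_cases α₃ with ⟨h3, _⟩ | ⟨h3, _⟩ <;> linarith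
  have bnd : ∀ a b : ℝ, -1 ≤ b → b ≤ 1 → -(a * b) ≤ |a| := by
    intro a b hb hb'
    calc -(a * b) ≤ |a * b| := neg_le_abs _
      _ = |a| * |b| := abs_mul a b
      _ ≤ |a| * 1 := by
          exact mul_le_mul_of_nonneg_left (abs_le.2 ⟨hb, hb'⟩) (abs_nonneg a)
      _ = |a| := mul_one _
  have h1 := bnd α₁ β₃ b3 b3'
  have h2 := bnd α₂ β₂ b2 b2'
  have h3 := bnd α₃ β₁ b1 b1'
  nlinarith [h1, h2, h3, key]
end

section
/- Let A₁, A₂, A₃ be dichotomic observables on ℂ^{d₁}, B₁, B₂, B₃ be dichotomic observables on ℂ^{d₂}, and ρ a state on ℂ^{d₁}⊗ℂ^{d₂}. Then the quantum Bell value 𝓘 = Re Tr[ℐ ρ] satisfies 𝓘 ≤ √(3·(12 − Re Tr[((A₁+A₂+A₃)⊗1)² ρ])), and in particular 𝓘 ≤ 6. -/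
open Kronecker ComplexOrder

/-!
Write the Bell operator as `∑ Xᵢ Yᵢ` with `Xᵢ = Cᵢ ⊗ 1` and `Yᵢ = 1 ⊗ Bᵢ`, where `C₁, C₂, C₃` are
the three combinations of the `Aⱼ`. A state `ρ` makes `⟪X, Y⟫ = Tr (Y ρ Xᴴ)` a semi-inner product,
so Cauchy–Schwarz bounds `Re Tr (Xᵢ Yᵢ ρ)` by `‖Xᵢ‖ ‖Yᵢ‖ = ‖Xᵢ‖`, as `Yᵢ² = 1` and `Tr ρ = 1`.
Cauchy–Schwarz in `ℝ³` then gives `∑ ‖Xᵢ‖ ≤ √(3 ∑ ‖Xᵢ‖²)`, and the ring identity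
`C₁² + C₂² + C₃² + (A₁ + A₂ + A₃)² = 4 (A₁² + A₂² + A₃²) = 12` turns `∑ ‖Xᵢ‖²` into
`12 - ‖(A₁ + A₂ + A₃) ⊗ 1‖² ≤ 12`.
-/

theorem bell_combinations_sum_mul_self {R : Type*} [Ring R] (x y z : R) :
    (x + y - z) * (x + y - z) + (x - y + z) * (x - y + z) + (-x + y + z) * (-x + y + z) +
      (x + y + z) * (x + y + z) = 4 * (x * x + y * y + z * z) := by
  noncomm_ring

theorem Real.sqrt_add_sqrt_add_sqrt_le {a b c : ℝ} (ha : 0 ≤ a) (hb : 0 ≤ b) (hc : 0 ≤ c) :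
    √a + √b + √c ≤ √(3 * (a + b + c)) := by
  apply Real.le_sqrt_of_sq_le
  nlinarith [Real.sq_sqrt ha, Real.sq_sqrt hb, Real.sq_sqrt hc, sq_nonneg (√a - √b),
    sq_nonneg (√b - √c), sq_nonneg (√a - √c)]

namespace Matrix

variable {𝕜 m n : Type*} [RCLike 𝕜]

theorem IsHermitian.kronecker {A : Matrix m m 𝕜} {B : Matrix n n 𝕜} (hA : A.IsHermitian)
    (hB : B.IsHermitian) : (A ⊗ₖ B).IsHermitian := by
  rw [IsHermitian, conjTranspose_kronecker, hA.eq, hB.eq]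

variable [Fintype m] [Fintype n]

theorem re_trace_mul_mul_conjTranspose_nonneg {ρ : Matrix n n 𝕜} (hρ : ρ.PosSemidef)
    (X : Matrix n n 𝕜) : 0 ≤ RCLike.re (X * ρ * Xᴴ).trace :=
  (RCLike.nonneg_iff.mp (hρ.mul_mul_conjTranspose_same X).trace_nonneg).1

theorem re_trace_mul_mul_conjTranspose_le_sqrt {ρ : Matrix n n 𝕜} (hρ : ρ.PosSemidef)
    (X Y : Matrix n n 𝕜) :
    RCLike.re (Y * ρ * Xᴴ).trace ≤
      √(RCLike.re (X * ρ * Xᴴ).trace) * √(RCLike.re (Y * ρ * Yᴴ).trace) := by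
  let := ρ.toMatrixSeminormedAddCommGroup hρ
  let := ρ.toMatrixInnerProductSpace hρ
  exact re_inner_le_norm X Y

theorem IsHermitian.re_trace_mul_self_mul_nonneg {X ρ : Matrix n n 𝕜} (hX : X.IsHermitian)
    (hρ : ρ.PosSemidef) : 0 ≤ RCLike.re (X * X * ρ).trace := by
  have h := re_trace_mul_mul_conjTranspose_nonneg hρ X
  rwa [hX.eq, trace_mul_cycle X ρ X] at h

theorem IsHermitian.re_trace_mul_mul_le_sqrt {X Y ρ : Matrix n n 𝕜} (hX : X.IsHermitian)
    (hY : Y.IsHermitian) (hρ : ρ.PosSemidef) :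
    RCLike.re (X * Y * ρ).trace ≤
      √(RCLike.re (X * X * ρ).trace) * √(RCLike.re (Y * Y * ρ).trace) := by
  have h := re_trace_mul_mul_conjTranspose_le_sqrt hρ X Y
  rwa [hX.eq, hY.eq, trace_mul_cycle Y ρ X, trace_mul_cycle X ρ X, trace_mul_cycle Y ρ Y] at h

variable [DecidableEq m] [DecidableEq n]

theorem re_trace_kronecker_mul_le_sqrt {C : Matrix m m 𝕜} {B : Matrix n n 𝕜}
    (hC : C.IsHermitian) (hB : B.IsHermitian) (hBB : B * B = 1)
    {ρ : Matrix (m × n) (m × n) 𝕜} (hρ : ρ.PosSemidef) (hρtr : ρ.trace = 1) :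
    RCLike.re ((C ⊗ₖ B) * ρ).trace ≤
      √(RCLike.re ((C ⊗ₖ (1 : Matrix n n 𝕜)) * (C ⊗ₖ (1 : Matrix n n 𝕜)) * ρ).trace) := by
  have h := (hC.kronecker isHermitian_one).re_trace_mul_mul_le_sqrt
    ((isHermitian_one (n := m)).kronecker hB) hρ
  rwa [← mul_kronecker_mul C 1 1 B, ← mul_kronecker_mul 1 1 B B, mul_one, one_mul, mul_one, hBB,
    one_kronecker_one, one_mul, hρtr, RCLike.one_re, Real.sqrt_one, mul_one] at h

theorem re_trace_bell_combinations_sum_mul_self {A₁ A₂ A₃ : Matrix m m 𝕜}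
    (h₁ : A₁ * A₁ = 1) (h₂ : A₂ * A₂ = 1) (h₃ : A₃ * A₃ = 1)
    {ρ : Matrix (m × n) (m × n) 𝕜} (hρtr : ρ.trace = 1) :
    RCLike.re (((A₁ + A₂ - A₃) ⊗ₖ (1 : Matrix n n 𝕜)) * ((A₁ + A₂ - A₃) ⊗ₖ 1) * ρ).trace +
      RCLike.re (((A₁ - A₂ + A₃) ⊗ₖ (1 : Matrix n n 𝕜)) * ((A₁ - A₂ + A₃) ⊗ₖ 1) * ρ).trace +
      RCLike.re (((-A₁ + A₂ + A₃) ⊗ₖ (1 : Matrix n n 𝕜)) * ((-A₁ + A₂ + A₃) ⊗ₖ 1) * ρ).trace +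
      RCLike.re (((A₁ + A₂ + A₃) ⊗ₖ (1 : Matrix n n 𝕜)) * ((A₁ + A₂ + A₃) ⊗ₖ 1) * ρ).trace
      = 12 := by
  simp only [← mul_kronecker_mul, mul_one, ← map_add, ← trace_add, ← add_mul, ← add_kronecker,
    bell_combinations_sum_mul_self, h₁, h₂, h₃]
  rw [show (4 * (1 + 1 + 1) : Matrix m m 𝕜) = (12 : 𝕜) • 1 by rw [ofNat_smul_eq_nsmul]; norm_num,
    smul_kronecker, one_kronecker_one, smul_mul, one_mul, trace_smul, hρtr, smul_eq_mul, mul_one]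
  norm_num

end Matrix

open Matrix

/-- Dimension-independent optimal quantum bound of the Bell functional:
for dichotomic observables `A₁,A₂,A₃` on `ℂ^{d₁}` and `B₁,B₂,B₃` on `ℂ^{d₂}`
and a state `ρ`, the quantum Bell value `𝓘 = Re Tr[ℐ ρ]` satisfies
`𝓘 ≤ √(3·(12 − Re Tr[((A₁+A₂+A₃)⊗1)² ρ]))`, and in particular `𝓘 ≤ 6`. -/
theorem quantum_bound_six {d₁ d₂ : ℕ}
    (A₁ A₂ A₃ : Matrix (Fin d₁) (Fin d₁) ℂ)
    (B₁ B₂ B₃ : Matrix (Fin d₂) (Fin d₂) ℂ)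
    (hA₁ : A₁.IsHermitian) (hA₂ : A₂.IsHermitian) (hA₃ : A₃.IsHermitian)
    (hA₁sq : A₁ * A₁ = 1) (hA₂sq : A₂ * A₂ = 1) (hA₃sq : A₃ * A₃ = 1)
    (hB₁ : B₁.IsHermitian) (hB₂ : B₂.IsHermitian) (hB₃ : B₃.IsHermitian)
    (hB₁sq : B₁ * B₁ = 1) (hB₂sq : B₂ * B₂ = 1) (hB₃sq : B₃ * B₃ = 1)
    (ρ : Matrix (Fin d₁ × Fin d₂) (Fin d₁ × Fin d₂) ℂ)
    (hρ : ρ.PosSemidef) (hρtr : ρ.trace = 1) :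
    (((((A₁ + A₂ - A₃) ⊗ₖ B₁ + (A₁ - A₂ + A₃) ⊗ₖ B₂ + (-A₁ + A₂ + A₃) ⊗ₖ B₃) * ρ).trace).re
        ≤ Real.sqrt (3 * (12 -
          (((((A₁ + A₂ + A₃) ⊗ₖ (1 : Matrix (Fin d₂) (Fin d₂) ℂ)) *
            ((A₁ + A₂ + A₃) ⊗ₖ (1 : Matrix (Fin d₂) (Fin d₂) ℂ)) * ρ).trace).re)))) ∧
    (((((A₁ + A₂ - A₃) ⊗ₖ B₁ + (A₁ - A₂ + A₃) ⊗ₖ B₂ + (-A₁ + A₂ + A₃) ⊗ₖ B₃) * ρ).trace).re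
        ≤ 6) := by
  have hK : ∀ C : Matrix (Fin d₁) (Fin d₁) ℂ, C.IsHermitian →
      0 ≤ ((C ⊗ₖ (1 : Matrix (Fin d₂) (Fin d₂) ℂ)) * (C ⊗ₖ 1) * ρ).trace.re :=
    fun C hC ↦ (hC.kronecker isHermitian_one).re_trace_mul_self_mul_nonneg hρ
  have hC₁ := (hA₁.add hA₂).sub hA₃
  have hC₂ := (hA₁.sub hA₂).add hA₃
  have hC₃ := (hA₁.neg.add hA₂).add hA₃
  have h₁ := re_trace_kronecker_mul_le_sqrt hC₁ hB₁ hB₁sq hρ hρtr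
  have h₂ := re_trace_kronecker_mul_le_sqrt hC₂ hB₂ hB₂sq hρ hρtr
  have h₃ := re_trace_kronecker_mul_le_sqrt hC₃ hB₃ hB₃sq hρ hρtr
  have hsum := re_trace_bell_combinations_sum_mul_self (n := Fin d₂) hA₁sq hA₂sq hA₃sq hρtr
  simp only [RCLike.re_to_complex] at h₁ h₂ h₃ hsum
  have hx := hK _ ((hA₁.add hA₂).add hA₃)
  refine (fun hbound ↦ ⟨hbound, hbound.trans ?_⟩) ?_
  · rw [add_mul, add_mul, trace_add, trace_add, Complex.add_re, Complex.add_re, ← hsum]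
    calc _ ≤ _ := add_le_add (add_le_add h₁ h₂) h₃
      _ ≤ _ := Real.sqrt_add_sqrt_add_sqrt_le (hK _ hC₁) (hK _ hC₂) (hK _ hC₃)
      _ = _ := by ring_nf
  · exact Real.sqrt_le_iff.mpr ⟨by norm_num, by linarith⟩
end

section
/- Let A₁, A₂, A₃ be dichotomic observables on ℂ^{d₁} with A₁+A₂+A₃ = 0, and B₁, B₂, B₃ be dichotomic observables on ℂ^{d₂} with B₁+B₂+B₃ = 0. Define G₁ = A₁⊗B₁, G₂ = (1/3)(A₂⊗B₂ + A₃⊗B₃ − A₃⊗B₂ − A₂⊗B₃), and G₃ = (1/3)(A₂A₁⊗B₂B₁ − A₂A₁⊗B₃B₁ − A₃A₁⊗B₂B₁ + A₃A₁⊗B₃B₁). Then G₃ = G₂·G₁, and G₁, G₂, G₃ pairwise commute. -/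
open Kronecker

private lemma neg_kron {l m n p : Type*} (A : Matrix l m ℂ) (B : Matrix n p ℂ) :
    (-A) ⊗ₖ B = -(A ⊗ₖ B) := by
  rw [← neg_one_smul ℂ A, Matrix.smul_kronecker, neg_one_smul]

private lemma kron_neg {l m n p : Type*} (A : Matrix l m ℂ) (B : Matrix n p ℂ) :
    A ⊗ₖ (-B) = -(A ⊗ₖ B) := by
  rw [← neg_one_smul ℂ B, Matrix.kronecker_smul, neg_one_smul]

private lemma anticomm {d : ℕ} (A₁ A₂ A₃ : Matrix (Fin d) (Fin d) ℂ)
    (hA₁sq : A₁ * A₁ = 1) (hA₂sq : A₂ * A₂ = 1) (hA₃sq : A₃ * A₃ = 1)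
    (hAsum : A₁ + A₂ + A₃ = 0) :
    A₂ * A₁ = -(1 + A₁ * A₂) ∧ A₃ * A₁ = A₁ * A₂ ∧ A₁ * A₃ = -(1 + A₁ * A₂) := by
  have hA3 : A₃ = -(A₁ + A₂) := by rw [← zero_sub, ← hAsum]; abel
  have h := hA₃sq
  rw [hA3, neg_mul_neg, add_mul, mul_add, mul_add, hA₁sq, hA₂sq] at h
  have hA21 : A₂ * A₁ = -(1 + A₁ * A₂) := by
    have h2 : A₂ * A₁ = 1 + A₁ * A₂ + (A₂ * A₁ + 1) - (1 + A₁ * A₂) - 1 := by abel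
    rw [h2, h]; abel
  refine ⟨hA21, ?_, ?_⟩
  · rw [hA3, neg_mul, add_mul, hA₁sq, hA21]; abel
  · rw [hA3, mul_neg, mul_add, hA₁sq]

/-- The commuting operators `C_i⊗C_i` of Appendix A: for trine dichotomic
observables (`A₁+A₂+A₃ = 0`, `B₁+B₂+B₃ = 0`),
`G₁ = A₁⊗B₁`, `G₂ = (1/3)(A₂⊗B₂ + A₃⊗B₃ − A₃⊗B₂ − A₂⊗B₃)` and
`G₃ = (1/3)(A₂A₁⊗B₂B₁ − A₂A₁⊗B₃B₁ − A₃A₁⊗B₂B₁ + A₃A₁⊗B₃B₁)` satisfy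
`G₃ = G₂·G₁` and pairwise commute. -/
theorem commuting_operators {d₁ d₂ : ℕ}
    (A₁ A₂ A₃ : Matrix (Fin d₁) (Fin d₁) ℂ)
    (B₁ B₂ B₃ : Matrix (Fin d₂) (Fin d₂) ℂ)
    (hA₁ : A₁.IsHermitian) (hA₂ : A₂.IsHermitian) (hA₃ : A₃.IsHermitian)
    (hA₁sq : A₁ * A₁ = 1) (hA₂sq : A₂ * A₂ = 1) (hA₃sq : A₃ * A₃ = 1)
    (hAsum : A₁ + A₂ + A₃ = 0)
    (hB₁ : B₁.IsHermitian) (hB₂ : B₂.IsHermitian) (hB₃ : B₃.IsHermitian)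
    (hB₁sq : B₁ * B₁ = 1) (hB₂sq : B₂ * B₂ = 1) (hB₃sq : B₃ * B₃ = 1)
    (hBsum : B₁ + B₂ + B₃ = 0) :
    let G₁ := A₁ ⊗ₖ B₁
    let G₂ := ((1 : ℂ)/3) • (A₂ ⊗ₖ B₂ + A₃ ⊗ₖ B₃ - A₃ ⊗ₖ B₂ - A₂ ⊗ₖ B₃)
    let G₃ := ((1 : ℂ)/3) • ((A₂ * A₁) ⊗ₖ (B₂ * B₁) - (A₂ * A₁) ⊗ₖ (B₃ * B₁)
      - (A₃ * A₁) ⊗ₖ (B₂ * B₁) + (A₃ * A₁) ⊗ₖ (B₃ * B₁))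
    G₃ = G₂ * G₁ ∧ Commute G₁ G₂ ∧ Commute G₁ G₃ ∧ Commute G₂ G₃ := by
  intro G₁ G₂ G₃
  obtain ⟨hA21, hA31, hA13⟩ := anticomm A₁ A₂ A₃ hA₁sq hA₂sq hA₃sq hAsum
  obtain ⟨hB21, hB31, hB13⟩ := anticomm B₁ B₂ B₃ hB₁sq hB₂sq hB₃sq hBsum
  have hG3 : G₃ = G₂ * G₁ := by
    show _ = ((1 : ℂ)/3) • (A₂ ⊗ₖ B₂ + A₃ ⊗ₖ B₃ - A₃ ⊗ₖ B₂ - A₂ ⊗ₖ B₃) * (A₁ ⊗ₖ B₁)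
    rw [smul_mul_assoc]
    show ((1 : ℂ)/3) • ((A₂ * A₁) ⊗ₖ (B₂ * B₁) - (A₂ * A₁) ⊗ₖ (B₃ * B₁)
      - (A₃ * A₁) ⊗ₖ (B₂ * B₁) + (A₃ * A₁) ⊗ₖ (B₃ * B₁)) = _
    congr 1
    simp only [sub_mul, add_mul, ← Matrix.mul_kronecker_mul]
    abel
  have hC12 : G₁ * G₂ = G₂ * G₁ := by
    show A₁ ⊗ₖ B₁ * (((1 : ℂ)/3) • (A₂ ⊗ₖ B₂ + A₃ ⊗ₖ B₃ - A₃ ⊗ₖ B₂ - A₂ ⊗ₖ B₃))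
      = ((1 : ℂ)/3) • (A₂ ⊗ₖ B₂ + A₃ ⊗ₖ B₃ - A₃ ⊗ₖ B₂ - A₂ ⊗ₖ B₃) * (A₁ ⊗ₖ B₁)
    rw [mul_smul_comm, smul_mul_assoc]
    congr 1
    simp only [mul_sub, sub_mul, mul_add, add_mul, ← Matrix.mul_kronecker_mul,
      hA21, hA31, hA13, hB21, hB31, hB13]
    simp only [neg_kron, kron_neg, Matrix.add_kronecker, Matrix.kronecker_add,
      Matrix.one_kronecker_one]
    abel
  have hG1sq : G₁ * G₁ = 1 := by
    show A₁ ⊗ₖ B₁ * (A₁ ⊗ₖ B₁) = 1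
    rw [← Matrix.mul_kronecker_mul, hA₁sq, hB₁sq, Matrix.one_kronecker_one]
  refine ⟨hG3, hC12, ?_, ?_⟩
  · show G₁ * G₃ = G₃ * G₁
    rw [hG3, ← mul_assoc, hC12, mul_assoc]
  · show G₂ * G₃ = G₃ * G₂
    rw [hG3, mul_assoc, ← hC12, ← mul_assoc]
end

section
/- Let σx, σy, σz be the Pauli matrices, A₁ = (σx+√3σz)/2, A₂ = (σx−√3σz)/2, A₃ = −σx, B₁ = σx, B₂ = (−σx+√3σz)/2, B₃ = −(σx+√3σz)/2, and ρ₁ = (1/4)(1⊗1 + σx⊗σx − σy⊗σy + σz⊗σz). For η₁, η₂, η₃, η₄ ∈ (0,1] with ξ_k = √(1−η_k²), define iteratively ρ_{k+1} = ((1+ξ_k)/2)ρ_k + ((1−ξ_k)/6)Σ_{y=1}^3 (1⊗B_y)ρ_k(1⊗B_y) for k = 1,2,3. Writing M₁ = A₁+A₂−A₃, M₂ = A₁−A₂+A₃, M₃ = −A₁+A₂+A₃, the sequential Bell values 𝓘^k = Re Tr[Σ_{y=1}^3 M_y⊗(η_kB_y) ρ_k] satisfy 𝓘¹ = 6η₁,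 𝓘² = 3η₂(1+ξ₁), 𝓘³ = (3η₃/2)(1+ξ₁)(1+ξ₂), and 𝓘⁴ = (3η₄/4)(1+ξ₁)(1+ξ₂)(1+ξ₃). -/
open Kronecker ComplexOrder Complex

/-- Trine observables for Bob, with `s` standing for `√3`. -/
noncomputable def trineB (s : ℂ) : Fin 3 → Matrix (Fin 2) (Fin 2) ℂ :=
  ![!![0, 1; 1, 0], ((1 : ℂ)/2) • (-(!![0, 1; 1, 0]) + s • !![1, 0; 0, -1]),
    -(((1 : ℂ)/2) • (!![0, 1; 1, 0] + s • !![1, 0; 0, -1]))]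

/-- Alice's combined observables. -/
noncomputable def trineM (s : ℂ) : Fin 3 → Matrix (Fin 2) (Fin 2) ℂ :=
  let σx : Matrix (Fin 2) (Fin 2) ℂ := !![0, 1; 1, 0]
  let σz : Matrix (Fin 2) (Fin 2) ℂ := !![1, 0; 0, -1]
  let A₁ : Matrix (Fin 2) (Fin 2) ℂ := ((1 : ℂ)/2) • (σx + s • σz)
  let A₂ : Matrix (Fin 2) (Fin 2) ℂ := ((1 : ℂ)/2) • (σx - s • σz)
  let A₃ : Matrix (Fin 2) (Fin 2) ℂ := -σx
  ![A₁ + A₂ - A₃, A₁ - A₂ + A₃, -A₁ + A₂ + A₃]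

/-- The Bell operator. -/
noncomputable def bellS (s : ℂ) : Matrix (Fin 2 × Fin 2) (Fin 2 × Fin 2) ℂ :=
  ∑ y : Fin 3, trineM s y ⊗ₖ trineB s y

/-- The initial (maximally entangled) state. -/
noncomputable def rho1 : Matrix (Fin 2 × Fin 2) (Fin 2 × Fin 2) ℂ :=
  ((1 : ℂ)/4) • ((1 : Matrix (Fin 2) (Fin 2) ℂ) ⊗ₖ (1 : Matrix (Fin 2) (Fin 2) ℂ)
    + !![0, 1; 1, 0] ⊗ₖ !![0, 1; 1, 0] - !![0, -I; I, 0] ⊗ₖ !![0, -I; I, 0]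
    + !![1, 0; 0, -1] ⊗ₖ !![1, 0; 0, -1])

/-- The state update map. -/
noncomputable def updM (s : ℂ) (ξ : ℝ) (ρ : Matrix (Fin 2 × Fin 2) (Fin 2 × Fin 2) ℂ) :
    Matrix (Fin 2 × Fin 2) (Fin 2 × Fin 2) ℂ :=
  (((1 + ξ) / 2 : ℝ) : ℂ) • ρ + (((1 - ξ) / 6 : ℝ) : ℂ) •
    ∑ y : Fin 3, ((1 : Matrix (Fin 2) (Fin 2) ℂ) ⊗ₖ trineB s y) * ρ *
      ((1 : Matrix (Fin 2) (Fin 2) ℂ) ⊗ₖ trineB s y)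

set_option maxHeartbeats 2000000 in
/-- Twirling by the trine observables annihilates the Bell operator. -/
lemma twirl_bellS (s : ℂ) (h3 : s ^ 2 = 3) :
    ∑ y : Fin 3, ((1 : Matrix (Fin 2) (Fin 2) ℂ) ⊗ₖ trineB s y) * bellS s *
      ((1 : Matrix (Fin 2) (Fin 2) ℂ) ⊗ₖ trineB s y) = 0 := by
  have h4 : s ^ 4 = 9 := by rw [show (4:ℕ) = 2*2 from rfl, pow_mul, h3]; norm_num
  have h3' : s ^ 3 = 3 * s := by rw [pow_succ, h3]
  ext ⟨i,j⟩ ⟨k,l⟩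
  fin_cases i <;> fin_cases j <;> fin_cases k <;> fin_cases l <;>
    simp [bellS, trineM, trineB, Matrix.mul_apply, Fin.sum_univ_succ,
      Fintype.sum_prod_type, Matrix.sum_apply, Matrix.one_apply] <;>
    ring_nf <;> simp [h3, h3', h4] <;> ring_nf

set_option maxHeartbeats 2000000 in
/-- The initial Bell value (before the detection-efficiency factor). -/
lemma trace_bellS_rho1 (s : ℂ) (h3 : s ^ 2 = 3) : (bellS s * rho1).trace = 6 := by
  have h4 : s ^ 4 = 9 := by rw [show (4:ℕ) = 2*2 from rfl, pow_mul, h3]; norm_num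
  have h3' : s ^ 3 = 3 * s := by rw [pow_succ, h3]
  simp [bellS, rho1, trineM, trineB, Matrix.trace, Matrix.diag, Matrix.mul_apply,
    Fin.sum_univ_succ, Fintype.sum_prod_type, Matrix.sum_apply, Matrix.one_apply]
  ring_nf
  simp [h3, h3', h4]
  ring_nf

/-- Each unsharp-measurement step shrinks the Bell correlation by `(1+ξ)/2`. -/
lemma trace_step (s : ℂ) (h3 : s ^ 2 = 3) (ξ : ℝ)
    (ρ : Matrix (Fin 2 × Fin 2) (Fin 2 × Fin 2) ℂ) :
    (bellS s * updM s ξ ρ).trace = (((1 + ξ) / 2 : ℝ) : ℂ) * (bellS s * ρ).trace := by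
  have key : ∀ N : Matrix (Fin 2 × Fin 2) (Fin 2 × Fin 2) ℂ,
      (bellS s * (N * ρ * N)).trace = (N * bellS s * N * ρ).trace := by
    intro N
    rw [show bellS s * (N * ρ * N) = (bellS s * N * ρ) * N by
      rw [← mul_assoc, ← mul_assoc]]
    rw [Matrix.trace_mul_comm]
    rw [show N * (bellS s * N * ρ) = (N * bellS s * N) * ρ by
      rw [← mul_assoc, ← mul_assoc]]
  rw [updM, Matrix.mul_add, Matrix.trace_add, Matrix.mul_smul, Matrix.trace_smul,
    Matrix.mul_smul, Matrix.trace_smul, Finset.mul_sum, Matrix.trace_sum]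
  simp only [key]
  rw [← Matrix.trace_sum, ← Finset.sum_mul, twirl_bellS s h3]
  simp [smul_eq_mul]

/-- The explicit qubit realization of the sequential Bell values: with the trine
observables and the maximally entangled state, the sequential Bell values are
`𝓘¹ = 6η₁`, `𝓘² = 3η₂(1+ξ₁)`, `𝓘³ = (3η₃/2)(1+ξ₁)(1+ξ₂)` and
`𝓘⁴ = (3η₄/4)(1+ξ₁)(1+ξ₂)(1+ξ₃)`. -/
theorem explicit_sequential_bell_values
    (η₁ η₂ η₃ η₄ : ℝ)
    (hη₁ : η₁ ∈ Set.Ioc (0 : ℝ) 1) (hη₂ : η₂ ∈ Set.Ioc (0 : ℝ) 1)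
    (hη₃ : η₃ ∈ Set.Ioc (0 : ℝ) 1) (hη₄ : η₄ ∈ Set.Ioc (0 : ℝ) 1) :
    let σx : Matrix (Fin 2) (Fin 2) ℂ := !![0, 1; 1, 0]
    let σy : Matrix (Fin 2) (Fin 2) ℂ := !![0, -I; I, 0]
    let σz : Matrix (Fin 2) (Fin 2) ℂ := !![1, 0; 0, -1]
    let A₁ : Matrix (Fin 2) (Fin 2) ℂ := ((1 : ℂ)/2) • (σx + (Real.sqrt 3 : ℂ) • σz)
    let A₂ : Matrix (Fin 2) (Fin 2) ℂ := ((1 : ℂ)/2) • (σx - (Real.sqrt 3 : ℂ) • σz)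
    let A₃ : Matrix (Fin 2) (Fin 2) ℂ := -σx
    let B : Fin 3 → Matrix (Fin 2) (Fin 2) ℂ :=
      ![σx, ((1 : ℂ)/2) • (-σx + (Real.sqrt 3 : ℂ) • σz),
        -(((1 : ℂ)/2) • (σx + (Real.sqrt 3 : ℂ) • σz))]
    let M : Fin 3 → Matrix (Fin 2) (Fin 2) ℂ :=
      ![A₁ + A₂ - A₃, A₁ - A₂ + A₃, -A₁ + A₂ + A₃]
    let ξ₁ : ℝ := Real.sqrt (1 - η₁ ^ 2)
    let ξ₂ : ℝ := Real.sqrt (1 - η₂ ^ 2)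
    let ξ₃ : ℝ := Real.sqrt (1 - η₃ ^ 2)
    let ρ₁ : Matrix (Fin 2 × Fin 2) (Fin 2 × Fin 2) ℂ :=
      ((1 : ℂ)/4) • ((1 : Matrix (Fin 2) (Fin 2) ℂ) ⊗ₖ (1 : Matrix (Fin 2) (Fin 2) ℂ)
        + σx ⊗ₖ σx - σy ⊗ₖ σy + σz ⊗ₖ σz)
    let upd : ℝ → Matrix (Fin 2 × Fin 2) (Fin 2 × Fin 2) ℂ →
        Matrix (Fin 2 × Fin 2) (Fin 2 × Fin 2) ℂ := fun ξ ρ =>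
      (((1 + ξ) / 2 : ℝ) : ℂ) • ρ + (((1 - ξ) / 6 : ℝ) : ℂ) •
        ∑ y : Fin 3, ((1 : Matrix (Fin 2) (Fin 2) ℂ) ⊗ₖ B y) * ρ *
          ((1 : Matrix (Fin 2) (Fin 2) ℂ) ⊗ₖ B y)
    let ρ₂ := upd ξ₁ ρ₁
    let ρ₃ := upd ξ₂ ρ₂
    let ρ₄ := upd ξ₃ ρ₃
    (((∑ y : Fin 3, M y ⊗ₖ ((η₁ : ℂ) • B y)) * ρ₁).trace).re = 6 * η₁ ∧
    (((∑ y : Fin 3, M y ⊗ₖ ((η₂ : ℂ) • B y)) * ρ₂).trace).re = 3 * η₂ * (1 + ξ₁) ∧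
    (((∑ y : Fin 3, M y ⊗ₖ ((η₃ : ℂ) • B y)) * ρ₃).trace).re
      = 3 * η₃ / 2 * (1 + ξ₁) * (1 + ξ₂) ∧
    (((∑ y : Fin 3, M y ⊗ₖ ((η₄ : ℂ) • B y)) * ρ₄).trace).re
      = 3 * η₄ / 4 * (1 + ξ₁) * (1 + ξ₂) * (1 + ξ₃) := by
  intro σx σy σz A₁ A₂ A₃ B M ξ₁ ξ₂ ξ₃ ρ₁ upd ρ₂ ρ₃ ρ₄
  set s : ℂ := ((Real.sqrt 3 : ℝ) : ℂ) with hsdef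
  have h3 : s ^ 2 = 3 := by
    rw [hsdef, ← Complex.ofReal_pow, Real.sq_sqrt (by norm_num : (0:ℝ) ≤ 3)]
    norm_num
  have hB : B = trineB s := rfl
  have hM : M = trineM s := rfl
  have hρ₁ : ρ₁ = rho1 := rfl
  have hupd : ∀ ξ ρ, upd ξ ρ = updM s ξ ρ := fun _ _ => rfl
  have hpull : ∀ (η : ℝ) (ρ : Matrix (Fin 2 × Fin 2) (Fin 2 × Fin 2) ℂ),
      (((∑ y : Fin 3, M y ⊗ₖ ((η : ℂ) • B y)) * ρ).trace)
        = (η : ℂ) * (bellS s * ρ).trace := by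
    intro η ρ
    have : (∑ y : Fin 3, M y ⊗ₖ ((η : ℂ) • B y)) = (η : ℂ) • bellS s := by
      rw [hB, hM, bellS, Finset.smul_sum]
      exact Finset.sum_congr rfl fun y _ => Matrix.kronecker_smul _ _ _
    rw [this, Matrix.smul_mul, Matrix.trace_smul, smul_eq_mul]
  have T1 : (bellS s * ρ₁).trace = 6 := by rw [hρ₁]; exact trace_bellS_rho1 s h3
  have T2 : (bellS s * ρ₂).trace = (((1 + ξ₁) / 2 : ℝ) : ℂ) * 6 := by
    show (bellS s * upd ξ₁ ρ₁).trace = _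
    rw [hupd, trace_step s h3, T1]
  have T3 : (bellS s * ρ₃).trace
      = (((1 + ξ₂) / 2 : ℝ) : ℂ) * ((((1 + ξ₁) / 2 : ℝ) : ℂ) * 6) := by
    show (bellS s * upd ξ₂ ρ₂).trace = _
    rw [hupd, trace_step s h3, T2]
  have T4 : (bellS s * ρ₄).trace = (((1 + ξ₃) / 2 : ℝ) : ℂ)
      * ((((1 + ξ₂) / 2 : ℝ) : ℂ) * ((((1 + ξ₁) / 2 : ℝ) : ℂ) * 6)) := by
    show (bellS s * upd ξ₃ ρ₃).trace = _
    rw [hupd, trace_step s h3, T3]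
  refine ⟨?_, ?_, ?_, ?_⟩ <;>
    rw [hpull] <;>
    simp only [T1, T2, T3, T4] <;>
    push_cast <;>
    simp [Complex.mul_re, Complex.mul_im] <;>
    ring
end

section
/- Let η₁, η₂, η₃, η₄ be real numbers in (0,1] such that 6η₁ > 4, 3η₂(1+√(1−η₁²)) > 4, and (3η₃/2)(1+√(1−η₁²))(1+√(1−η₂²)) > 4. Then (3η₄/4)(1+√(1−η₁²))(1+√(1−η₂²))(1+√(1−η₃²)) ≤ (3/4)(1+√5/3)³ < 4. In particular no fourth sequential observer can violate the preparation-noncontextual bound 4. -/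
lemma sqrt_aux (η : ℝ) (h : 2/3 < η) : Real.sqrt (1 - η ^ 2) ≤ Real.sqrt 5 / 3 := by
  have h9 : Real.sqrt ((5:ℝ)/9) = Real.sqrt 5 / 3 := by
    rw [Real.sqrt_div (by norm_num : (0:ℝ) ≤ 5), show (9:ℝ) = 3^2 by norm_num,
      Real.sqrt_sq (by norm_num : (0:ℝ) ≤ 3)]
  calc Real.sqrt (1 - η ^ 2) ≤ Real.sqrt (5/9) := Real.sqrt_le_sqrt (by nlinarith)
    _ = Real.sqrt 5 / 3 := h9

/-- Theorem 3: if three sequential observers violate the preparation-noncontextual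
bound 4, the fourth sequential Bell value is at most `(3/4)(1+√5/3)³ < 4`, so no
fourth observer can violate the bound. -/
theorem no_fourth_violation (η₁ η₂ η₃ η₄ : ℝ)
    (hη₁ : η₁ ∈ Set.Ioc (0 : ℝ) 1) (hη₂ : η₂ ∈ Set.Ioc (0 : ℝ) 1)
    (hη₃ : η₃ ∈ Set.Ioc (0 : ℝ) 1) (hη₄ : η₄ ∈ Set.Ioc (0 : ℝ) 1)
    (h1 : 6 * η₁ > 4)
    (h2 : 3 * η₂ * (1 + Real.sqrt (1 - η₁ ^ 2)) > 4)
    (h3 : 3 * η₃ / 2 * (1 + Real.sqrt (1 - η₁ ^ 2)) * (1 + Real.sqrt (1 - η₂ ^ 2)) > 4) :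
    3 * η₄ / 4 * (1 + Real.sqrt (1 - η₁ ^ 2)) * (1 + Real.sqrt (1 - η₂ ^ 2))
        * (1 + Real.sqrt (1 - η₃ ^ 2))
      ≤ 3 / 4 * (1 + Real.sqrt 5 / 3) ^ 3 ∧
    3 / 4 * (1 + Real.sqrt 5 / 3) ^ 3 < 4 := by
  obtain ⟨p1, q1⟩ := hη₁; obtain ⟨p2, q2⟩ := hη₂
  obtain ⟨p3, q3⟩ := hη₃; obtain ⟨p4, q4⟩ := hη₄
  set s₁ := Real.sqrt (1 - η₁ ^ 2) with hs₁
  set s₂ := Real.sqrt (1 - η₂ ^ 2) with hs₂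
  set s₃ := Real.sqrt (1 - η₃ ^ 2) with hs₃
  have n1 : 0 ≤ s₁ := Real.sqrt_nonneg _
  have n2 : 0 ≤ s₂ := Real.sqrt_nonneg _
  have n3 : 0 ≤ s₃ := Real.sqrt_nonneg _
  have s5 : 0 ≤ Real.sqrt 5 := Real.sqrt_nonneg _
  have s5sq : Real.sqrt 5 ^ 2 = 5 := Real.sq_sqrt (by norm_num)
  have s5lt : Real.sqrt 5 < 9/4 := by nlinarith
  -- bounds
  have b1 : s₁ ≤ Real.sqrt 5 / 3 := sqrt_aux η₁ (by linarith)
  have hB : Real.sqrt 5 / 3 ≤ 1 := by nlinarith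
  have hη₂b : 2/3 < η₂ := by nlinarith
  have b2 : s₂ ≤ Real.sqrt 5 / 3 := sqrt_aux η₂ hη₂b
  have hP : (1 + s₁) * (1 + s₂) ≤ 2 * 2 :=
    mul_le_mul (by linarith) (by linarith) (by linarith) (by norm_num)
  have hη₃b : 2/3 < η₃ := by nlinarith [mul_le_mul_of_nonneg_left hP (by linarith : (0:ℝ) ≤ 3 * η₃ / 2)]
  have b3 : s₃ ≤ Real.sqrt 5 / 3 := sqrt_aux η₃ hη₃b
  constructor
  · have hBpos : (0:ℝ) ≤ 1 + Real.sqrt 5 / 3 := by linarith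
    calc 3 * η₄ / 4 * (1 + s₁) * (1 + s₂) * (1 + s₃)
        ≤ 3 * 1 / 4 * (1 + Real.sqrt 5 / 3) * (1 + Real.sqrt 5 / 3) * (1 + Real.sqrt 5 / 3) := by
          gcongr <;> linarith
      _ = 3 / 4 * (1 + Real.sqrt 5 / 3) ^ 3 := by ring
  · nlinarith [sq_nonneg (Real.sqrt 5)]
end

section
/- Let η₁, η₂, η₃ be real numbers in (0,1] such that 6η₁ > 4, 3η₂(1+√(1−η₁²)) > 4, and (3η₃/2)(1+√(1−η₁²))(1+√(1−η₂²)) > 4. Then 2/3 < η₁ < √5/3. -/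
/-- Simultaneous sequential violations by three observers certify Bob¹'s
unsharpness parameter: `2/3 < η₁ < √5/3`. -/
theorem eta1_certified_range (η₁ η₂ η₃ : ℝ)
    (hη₁ : η₁ ∈ Set.Ioc (0 : ℝ) 1) (hη₂ : η₂ ∈ Set.Ioc (0 : ℝ) 1)
    (hη₃ : η₃ ∈ Set.Ioc (0 : ℝ) 1)
    (h1 : 6 * η₁ > 4)
    (h2 : 3 * η₂ * (1 + Real.sqrt (1 - η₁ ^ 2)) > 4)
    (h3 : 3 * η₃ / 2 * (1 + Real.sqrt (1 - η₁ ^ 2)) * (1 + Real.sqrt (1 - η₂ ^ 2)) > 4) :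
    2 / 3 < η₁ ∧ η₁ < Real.sqrt 5 / 3 := by
  obtain ⟨h1p, h1le⟩ := hη₁
  obtain ⟨h2p, h2le⟩ := hη₂
  obtain ⟨h3p, h3le⟩ := hη₃
  refine ⟨by linarith, ?_⟩
  by_contra hcon
  push_neg at hcon
  set s₁ := Real.sqrt (1 - η₁ ^ 2) with hs₁
  set s₂ := Real.sqrt (1 - η₂ ^ 2) with hs₂
  have hs₁0 : 0 ≤ s₁ := Real.sqrt_nonneg _
  have hs₂0 : 0 ≤ s₂ := Real.sqrt_nonneg _
  -- η₁ ≥ √5/3 so η₁² ≥ 5/9 so s₁ ≤ 2/3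
  have h5 : Real.sqrt 5 ≤ 3 * η₁ := by linarith
  have h5sq : (5 : ℝ) ≤ (3 * η₁) ^ 2 := by
    have := Real.sq_sqrt (by norm_num : (5:ℝ) ≥ 0)
    nlinarith [Real.sqrt_nonneg (5:ℝ)]
  have hη₁sq : (5 : ℝ) / 9 ≤ η₁ ^ 2 := by nlinarith
  have hs₁le : s₁ ≤ 2 / 3 := by
    have : (1 : ℝ) - η₁ ^ 2 ≤ (2/3) ^ 2 := by nlinarith
    calc s₁ ≤ Real.sqrt ((2/3)^2) := Real.sqrt_le_sqrt this
      _ = 2/3 := by rw [Real.sqrt_sq (by norm_num)]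
  have hs₂sq : s₂ ^ 2 = 1 - η₂ ^ 2 := Real.sq_sqrt (by nlinarith)
  -- from h3 and η₃ ≤ 1
  have hA : (1 + s₁) * (1 + s₂) > 8 / 3 := by nlinarith
  -- from h2
  have hB : η₂ * (1 + s₁) > 4 / 3 := by nlinarith
  nlinarith [sq_nonneg ((1 + s₁) * s₂ - (8/3 - (1 + s₁))), mul_nonneg (mul_nonneg (by linarith : (0:ℝ) ≤ 1 + s₁) (by linarith : (0:ℝ) ≤ 1 + s₁)) (sq_nonneg s₂), sq_nonneg (η₂ * (1 + s₁))]
end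

section
/- Let B₁, B₂, B₃ be dichotomic observables on ℂ^d satisfying B₁ + B₂ + B₃ = 0. Then for each y ∈ {1,2,3}, the conjugation sum vanishes: B₁B_yB₁ + B₂B_yB₂ + B₃B_yB₃ = 0. -/
section aux

variable {R : Type*} [Ring R]

lemma trine_aux (a b : R) (ha : a * a = 1) (hb : b * b = 1)
    (hanti : a * b + b * a = -1) :
    a * b * a = -a - b ∧ b * a * b = -b - a := by
  have hab : a * b = -1 - b * a := eq_sub_of_add_eq hanti
  have hba : b * a = -1 - a * b := eq_sub_of_add_eq (by rw [add_comm]; exact hanti)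
  constructor
  · calc a * b * a = (-1 - b * a) * a := by rw [hab]
      _ = -a - b * (a * a) := by noncomm_ring
      _ = -a - b := by rw [ha, mul_one]
  · calc b * a * b = (-1 - a * b) * b := by rw [hba]
      _ = -b - a * (b * b) := by noncomm_ring
      _ = -b - a := by rw [hb, mul_one]

end aux

/-- For trine dichotomic observables (`B₁+B₂+B₃ = 0`), the conjugation sum
vanishes: `B₁B_yB₁ + B₂B_yB₂ + B₃B_yB₃ = 0` for each `y` (Eq. (34)). -/
theorem trine_conjugation_sum_vanishes {d : ℕ}
    (B : Fin 3 → Matrix (Fin d) (Fin d) ℂ)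
    (hB : ∀ i, (B i).IsHermitian) (hBsq : ∀ i, B i * B i = 1)
    (hsum : B 0 + B 1 + B 2 = 0) :
    ∀ y : Fin 3, ∑ i : Fin 3, B i * B y * B i = 0 := by
  set a := B 0 with ha0
  set b := B 1 with hb0
  have ha : a * a = 1 := hBsq 0
  have hb : b * b = 1 := hBsq 1
  have hc : B 2 = -(a + b) := by linear_combination (norm := abel) hsum
  have hcsq := hBsq 2
  rw [hc] at hcsq
  have hanti : a * b + b * a = -1 := by
    have h : 1 + (a*b + b*a) + 1 = 1 := by
      calc 1 + (a*b + b*a) + 1 = a*a + (a*b + b*a) + b*b := by rw [ha, hb]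
        _ = -(a+b) * -(a+b) := by noncomm_ring
        _ = 1 := hcsq
    linear_combination (norm := abel) h
  obtain ⟨haba, hbab⟩ := trine_aux a b ha hb hanti
  intro y
  rw [Fin.sum_univ_three, hc]
  fin_cases y
  · -- y = 0
    show a * a * a + b * a * b + -(a + b) * a * -(a + b) = 0
    have e : -(a+b) * a * -(a+b) = a*a*a + (a*a)*b + b*(a*a) + b*a*b := by noncomm_ring
    rw [e, ha, hbab, one_mul, mul_one]
    noncomm_ring
  · -- y = 1
    show a * b * a + b * b * b + -(a + b) * b * -(a + b) = 0
    have e : -(a+b) * b * -(a+b) = a*b*a + a*(b*b) + (b*b)*a + b*b*b := by noncomm_ring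
    rw [e, hb, haba, mul_one, one_mul]
    noncomm_ring
  · -- y = 2
    show a * B 2 * a + b * B 2 * b + -(a + b) * B 2 * -(a + b) = 0
    rw [hc]
    have e1 : a * -(a+b) * a = -(a*a*a) - a*b*a := by noncomm_ring
    have e2 : b * -(a+b) * b = -(b*a*b) - b*b*b := by noncomm_ring
    have e3 : -(a+b) * -(a+b) * -(a+b)
        = -(a*a*a) - (a*a)*b - a*b*a - a*(b*b) - b*(a*a) - b*a*b - (b*b)*a - b*b*b := by
      noncomm_ring
    rw [e1, e2, e3, ha, hb, haba, hbab]
    noncomm_ring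
end

section
/- Let η₃ ∈ (0,1] be a real number and set η₂ = 4η₃/(4+η₃²) and η₁ = 4η₃(4+η₃²)/(16+12η₃²+η₃⁴). Then η₁, η₂ ∈ (0,1] and the three sequential Bell values coincide: 6η₁ = 3η₂(1+√(1−η₁²)) = (3η₃/2)(1+√(1−η₁²))(1+√(1−η₂²)) = 24η₃(4+η₃²)/(16+12η₃²+η₃⁴). -/
/-- The one-parameter family of unsharpness parameters for which the three
sequential Bell values coincide: with `η₂ = 4η₃/(4+η₃²)` and
`η₁ = 4η₃(4+η₃²)/(16+12η₃²+η₃⁴)`, one has `η₁, η₂ ∈ (0,1]` and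
`6η₁ = 3η₂(1+√(1−η₁²)) = (3η₃/2)(1+√(1−η₁²))(1+√(1−η₂²))
     = 24η₃(4+η₃²)/(16+12η₃²+η₃⁴)`. -/
theorem equal_sequential_bell_values (η₃ : ℝ) (hη₃ : η₃ ∈ Set.Ioc (0 : ℝ) 1) :
    let η₂ : ℝ := 4 * η₃ / (4 + η₃ ^ 2)
    let η₁ : ℝ := 4 * η₃ * (4 + η₃ ^ 2) / (16 + 12 * η₃ ^ 2 + η₃ ^ 4)
    (η₁ ∈ Set.Ioc (0 : ℝ) 1) ∧ (η₂ ∈ Set.Ioc (0 : ℝ) 1) ∧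
    6 * η₁ = 24 * η₃ * (4 + η₃ ^ 2) / (16 + 12 * η₃ ^ 2 + η₃ ^ 4) ∧
    3 * η₂ * (1 + Real.sqrt (1 - η₁ ^ 2))
      = 24 * η₃ * (4 + η₃ ^ 2) / (16 + 12 * η₃ ^ 2 + η₃ ^ 4) ∧
    3 * η₃ / 2 * (1 + Real.sqrt (1 - η₁ ^ 2)) * (1 + Real.sqrt (1 - η₂ ^ 2))
      = 24 * η₃ * (4 + η₃ ^ 2) / (16 + 12 * η₃ ^ 2 + η₃ ^ 4) := by
  obtain ⟨ht0, ht1⟩ := hη₃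
  intro η₂ η₁
  have hA : (0:ℝ) < 4 + η₃ ^ 2 := by positivity
  have hD : (0:ℝ) < 16 + 12 * η₃ ^ 2 + η₃ ^ 4 := by positivity
  have ht2 : η₃ ^ 2 ≤ 1 := by nlinarith
  have hs2 : Real.sqrt (1 - η₂ ^ 2) = (4 - η₃ ^ 2) / (4 + η₃ ^ 2) := by
    have h : 1 - η₂ ^ 2 = ((4 - η₃ ^ 2) / (4 + η₃ ^ 2)) ^ 2 := by
      show 1 - (4 * η₃ / (4 + η₃ ^ 2)) ^ 2 = _
      field_simp
      ring
    rw [h, Real.sqrt_sq (div_nonneg (by nlinarith) hA.le)]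
  have hs1 : Real.sqrt (1 - η₁ ^ 2)
      = (16 + 4 * η₃ ^ 2 + η₃ ^ 4) / (16 + 12 * η₃ ^ 2 + η₃ ^ 4) := by
    have h : 1 - η₁ ^ 2
        = ((16 + 4 * η₃ ^ 2 + η₃ ^ 4) / (16 + 12 * η₃ ^ 2 + η₃ ^ 4)) ^ 2 := by
      show 1 - (4 * η₃ * (4 + η₃ ^ 2) / (16 + 12 * η₃ ^ 2 + η₃ ^ 4)) ^ 2 = _
      field_simp
      ring
    rw [h, Real.sqrt_sq (by positivity)]
  refine ⟨⟨by positivity, ?_⟩, ⟨by positivity, ?_⟩, ?_, ?_, ?_⟩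
  · rw [div_le_one hD]; nlinarith
  · rw [div_le_one hA]; nlinarith
  · show 6 * (4 * η₃ * (4 + η₃ ^ 2) / (16 + 12 * η₃ ^ 2 + η₃ ^ 4)) = _
    ring
  · rw [hs1]
    show 3 * (4 * η₃ / (4 + η₃ ^ 2)) * _ = _
    field_simp
    ring
  · rw [hs1, hs2]
    field_simp
    ring
end
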